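/- Let (Δ_k)_{k∈ℕ} be a sequence of square-integrable, non-negative real random variables adapted to a filtration (F_k)_{k∈ℕ} with Δ_0 = 0 almost surely. Let N ≥ 1, T > 0 and I, I₁, I₂ > 0 with I ≤ T, and suppose E[Δ_{k+1} | F_k] ≤ N·I₁ and E[Δ_{k+1}² | F_k] ≤ N²·I·I₂ almost surely for all k. Then for every b > 0: P( sup_{0 ≤ k ≤ ⌊T/I⌋} Σ_{j=0}^{k} Δ_j > b ) ≤ (T·N² / b²)·( I₂ + (I₁²/I²)·(T + I) ). -/

import Mathlib

/-!
Since the `Δ j` are non-negative, the largest partial sum up to `n = ⌊T/I⌋` is the last one, `S`,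
and Chebyshev's inequality bounds the probability by `E[S²]/b²`. Expanding `E[S²]` (the term
`Δ 0` vanishes), each of the `n` diagonal terms is at most `N² I I₂` by the conditional second
moment bound, and each off-diagonal term `E[Δ i Δ j]`, `i < j`, is at most `(N I₁)²`: condition on
`ℱ (j - 1)` and pull out the measurable factor `Δ i`. Finally `n I ≤ T`.
-/

open MeasureTheory Finset

section
variable {Ω : Type*} {m0 : MeasurableSpace Ω} {μ : Measure Ω}

lemma measure_lt_le_integral_sq_div_sq [IsFiniteMeasure μ] {f : Ω → ℝ} (hf : MemLp f 2 μ)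
    {b : ℝ} (hb : 0 < b) :
    μ {ω | b < f ω} ≤ ENNReal.ofReal ((∫ ω, f ω ^ 2 ∂μ) / b ^ 2) := by
  have hmarkov := mul_meas_ge_le_integral_of_nonneg (Filter.Eventually.of_forall
    fun ω => sq_nonneg (f ω)) hf.integrable_sq (b ^ 2)
  have hsub : {ω | b < f ω} ⊆ {ω | b ^ 2 ≤ f ω ^ 2} := fun ω (hω : b < f ω) => by
    show b ^ 2 ≤ f ω ^ 2
    nlinarith
  calc μ {ω | b < f ω} ≤ μ {ω | b ^ 2 ≤ f ω ^ 2} := measure_mono hsub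
    _ = ENNReal.ofReal (μ.real {ω | b ^ 2 ≤ f ω ^ 2}) := (ofReal_measureReal).symm
    _ ≤ _ := ENNReal.ofReal_le_ofReal <| by
      rw [le_div_iff₀ (by positivity), mul_comm]
      exact hmarkov

lemma integral_le_of_condExp_le [IsProbabilityMeasure μ] {m : MeasurableSpace Ω} (hm : m ≤ m0)
    {f : Ω → ℝ} {c : ℝ} (h : μ[f | m] ≤ᵐ[μ] fun _ => c) : ∫ ω, f ω ∂μ ≤ c := by
  rw [← integral_condExp hm]
  simpa using integral_mono_ae integrable_condExp (integrable_const c) h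

lemma integral_mul_le_of_condExp_le {m : MeasurableSpace Ω} (hm : m ≤ m0)
    [SigmaFinite (μ.trim hm)] {f g : Ω → ℝ} {c : ℝ}
    (hfm : StronglyMeasurable[m] f) (hf0 : 0 ≤ᵐ[μ] f) (hf : Integrable f μ)
    (hg : Integrable g μ) (hfg : Integrable (f * g) μ) (h : μ[g | m] ≤ᵐ[μ] fun _ => c) :
    ∫ ω, f ω * g ω ∂μ ≤ (∫ ω, f ω ∂μ) * c := by
  have hpull : μ[f * g | m] =ᵐ[μ] f * μ[g | m] :=
    condExp_mul_of_stronglyMeasurable_left hfm hfg hg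
  change ∫ ω, (f * g) ω ∂μ ≤ _
  rw [← integral_mul_const, ← integral_condExp hm, integral_congr_ae hpull]
  refine integral_mono_ae (integrable_condExp.congr hpull) (hf.mul_const c) ?_
  filter_upwards [hf0, h] with ω hω hc
  exact mul_le_mul_of_nonneg_left hc hω

lemma sum_sum_le_of_diag_le_of_offDiag_le {ι : Type*} [DecidableEq ι] (s : Finset ι)
    (M : ι → ι → ℝ) {a c : ℝ} (hc : 0 ≤ c) (hdiag : ∀ i ∈ s, M i i ≤ a)
    (hoff : ∀ i ∈ s, ∀ j ∈ s, i ≠ j → M i j ≤ c) :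
    ∑ i ∈ s, ∑ j ∈ s, M i j ≤ #s * a + #s ^ 2 * c := by
  have hrow : ∀ i ∈ s, ∑ j ∈ s, M i j ≤ a + #s * c := fun i hi => by
    rw [← add_sum_erase s _ hi]
    gcongr
    · exact hdiag i hi
    · calc ∑ j ∈ s.erase i, M i j ≤ ∑ _j ∈ s.erase i, c :=
            sum_le_sum fun j hj => hoff i hi j (mem_of_mem_erase hj) (ne_of_mem_erase hj).symm
        _ ≤ #s * c := by
          rw [sum_const, nsmul_eq_mul]
          exact mul_le_mul_of_nonneg_right (mod_cast card_erase_le) hc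
  calc ∑ i ∈ s, ∑ j ∈ s, M i j ≤ ∑ _i ∈ s, (a + #s * c) := sum_le_sum hrow
    _ = #s * a + #s ^ 2 * c := by rw [sum_const, nsmul_eq_mul]; ring

lemma integral_sq_sum_eq {ι : Type*} (s : Finset ι) {X : ι → Ω → ℝ} (hX : ∀ i, MemLp (X i) 2 μ) :
    ∫ ω, (∑ i ∈ s, X i ω) ^ 2 ∂μ = ∑ i ∈ s, ∑ j ∈ s, ∫ ω, X i ω * X j ω ∂μ := by
  have hmul : ∀ i j, Integrable (fun ω => X i ω * X j ω) μ := fun i j =>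
    (hX i).integrable_mul (hX j)
  simp_rw [sq, sum_mul_sum]
  rw [integral_finsetSum _ fun i _ => integrable_finsetSum _ fun j _ => hmul i j]
  exact sum_congr rfl fun i _ => integral_finsetSum _ fun j _ => hmul i j

end

section
variable {Ω : Type*} {m0 : MeasurableSpace Ω} {μ : Measure Ω} [IsProbabilityMeasure μ]
  {ℱ : Filtration ℕ m0} {X : ℕ → Ω → ℝ} {a c : ℝ}

lemma integral_le_of_condExp_succ_le (hX0 : X 0 =ᵐ[μ] 0) (hc : 0 ≤ c)
    (hcond : ∀ k, μ[X (k + 1) | ℱ k] ≤ᵐ[μ] fun _ => c) : ∀ i, ∫ ω, X i ω ∂μ ≤ c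
  | 0 => by simpa [integral_congr_ae hX0] using hc
  | k + 1 => integral_le_of_condExp_le (ℱ.le k) (hcond k)

lemma integral_mul_le_sq_of_condExp_succ_le (hadapt : Adapted ℱ X)
    (hL2 : ∀ k, MemLp (X k) 2 μ) (hnonneg : ∀ k, 0 ≤ᵐ[μ] X k) (hX0 : X 0 =ᵐ[μ] 0) (hc : 0 ≤ c)
    (hcond : ∀ k, μ[X (k + 1) | ℱ k] ≤ᵐ[μ] fun _ => c) {i j : ℕ} (hij : i < j) :
    ∫ ω, X i ω * X j ω ∂μ ≤ c ^ 2 := by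
  obtain ⟨k, rfl⟩ : ∃ k, j = k + 1 := ⟨j - 1, by omega⟩
  have hXi : StronglyMeasurable[ℱ k] (X i) := ((hadapt i).mono (ℱ.mono (by omega)) le_rfl).stronglyMeasurable
  calc ∫ ω, X i ω * X (k + 1) ω ∂μ ≤ (∫ ω, X i ω ∂μ) * c :=
        integral_mul_le_of_condExp_le (ℱ.le k) hXi (hnonneg i) ((hL2 i).integrable one_le_two)
          ((hL2 (k + 1)).integrable one_le_two) ((hL2 i).integrable_mul (hL2 (k + 1))) (hcond k)
    _ ≤ c * c := mul_le_mul_of_nonneg_right (integral_le_of_condExp_succ_le hX0 hc hcond i) hc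
    _ = c ^ 2 := (sq c).symm

lemma integral_sq_sum_range_le (hadapt : Adapted ℱ X) (hL2 : ∀ k, MemLp (X k) 2 μ)
    (hnonneg : ∀ k, 0 ≤ᵐ[μ] X k) (hX0 : X 0 =ᵐ[μ] 0) (hc : 0 ≤ c)
    (hcond : ∀ k, μ[X (k + 1) | ℱ k] ≤ᵐ[μ] fun _ => c)
    (hcond2 : ∀ k, μ[fun ω => X (k + 1) ω ^ 2 | ℱ k] ≤ᵐ[μ] fun _ => a) (n : ℕ) :
    ∫ ω, (∑ j ∈ range (n + 1), X j ω) ^ 2 ∂μ ≤ n * a + n ^ 2 * c ^ 2 := by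
  have hdrop : (fun ω => (∑ j ∈ range (n + 1), X j ω) ^ 2)
      =ᵐ[μ] fun ω => (∑ i ∈ range n, X (i + 1) ω) ^ 2 := by
    filter_upwards [hX0] with ω hω
    simp [sum_range_succ', hω]
  rw [integral_congr_ae hdrop, integral_sq_sum_eq _ fun i => hL2 (i + 1)]
  simpa using sum_sum_le_of_diag_le_of_offDiag_le (range n)
    (fun i j => ∫ ω, X (i + 1) ω * X (j + 1) ω ∂μ) (sq_nonneg c)
    (fun i _ => by simpa only [← sq] using integral_le_of_condExp_le (ℱ.le i) (hcond2 i))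
    (fun i _ j _ hij => by
      rcases hij.lt_or_gt with h | h
      · exact integral_mul_le_sq_of_condExp_succ_le hadapt hL2 hnonneg hX0 hc hcond (by omega)
      · simpa only [mul_comm] using
          integral_mul_le_sq_of_condExp_succ_le hadapt hL2 hnonneg hX0 hc hcond
            (show j + 1 < i + 1 by omega))

end

lemma exists_le_lt_sum_range_iff {x : ℕ → ℝ} (hx : ∀ j, 0 ≤ x j) {b : ℝ} {n : ℕ} :
    (∃ k ≤ n, b < ∑ j ∈ range (k + 1), x j) ↔ b < ∑ j ∈ range (n + 1), x j :=
  ⟨fun ⟨_, hk, hb⟩ => hb.trans_le <|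
    sum_le_sum_of_subset_of_nonneg (range_subset_range.2 (by omega)) fun j _ _ => hx j,
   fun hb => ⟨n, le_rfl, hb⟩⟩

lemma floor_div_mul_add_sq_mul_le {T I N I₁ I₂ : ℝ} (hT : 0 < T) (hI : 0 < I) (hI₂ : 0 ≤ I₂) :
    ⌊T / I⌋₊ * (N ^ 2 * I * I₂) + ⌊T / I⌋₊ ^ 2 * (N * I₁) ^ 2
      ≤ T * N ^ 2 * (I₂ + I₁ ^ 2 / I ^ 2 * (T + I)) := by
  set n : ℝ := (⌊T / I⌋₊ : ℝ)
  have hnI : n * I ≤ T := (le_div_iff₀ hI).1 (Nat.floor_le (by positivity))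
  have hn2 : n ^ 2 * I ^ 2 ≤ T * (T + I) := by
    nlinarith [mul_le_mul hnI hnI (by positivity) hT.le]
  have h1 : n * (N ^ 2 * I * I₂) ≤ T * (N ^ 2 * I₂) := by
    nlinarith [mul_le_mul_of_nonneg_right hnI (by positivity : 0 ≤ N ^ 2 * I₂)]
  have h2 : n ^ 2 * (N * I₁) ^ 2 ≤ T * (T + I) / I ^ 2 * (N * I₁) ^ 2 :=
    mul_le_mul_of_nonneg_right ((le_div_iff₀ (by positivity)).2 hn2) (sq_nonneg _)
  calc n * (N ^ 2 * I * I₂) + n ^ 2 * (N * I₁) ^ 2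
      ≤ T * (N ^ 2 * I₂) + T * (T + I) / I ^ 2 * (N * I₁) ^ 2 := add_le_add h1 h2
    _ = T * N ^ 2 * (I₂ + I₁ ^ 2 / I ^ 2 * (T + I)) := by ring

theorem cumulated_transitions_bound_general {Ω : Type*} {m0 : MeasurableSpace Ω}
    (P : Measure Ω) [IsProbabilityMeasure P]
    (ℱ : Filtration ℕ m0) (Δ : ℕ → Ω → ℝ)
    (hadapt : Adapted ℱ Δ)
    (hL2 : ∀ k, MemLp (Δ k) 2 P)
    (hnonneg : ∀ k, 0 ≤ᵐ[P] Δ k)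
    (hΔ0 : Δ 0 =ᵐ[P] 0)
    (N : ℕ) (T I I₁ I₂ : ℝ)
    (hT : 0 < T) (hI : 0 < I) (hI₁ : 0 < I₁) (hI₂ : 0 < I₂)
    (hcond1 : ∀ k, P[Δ (k + 1) | ℱ k] ≤ᵐ[P] fun _ => (N : ℝ) * I₁)
    (hcond2 : ∀ k, P[fun ω => (Δ (k + 1) ω) ^ 2 | ℱ k]
        ≤ᵐ[P] fun _ => (N : ℝ) ^ 2 * I * I₂)
    (b : ℝ) (hb : 0 < b) :
    P {ω | ∃ k ≤ ⌊T / I⌋₊, b < ∑ j ∈ Finset.range (k + 1), Δ j ω}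
      ≤ ENNReal.ofReal
          (T * (N : ℝ) ^ 2 / b ^ 2 * (I₂ + I₁ ^ 2 / I ^ 2 * (T + I))) := by
  set n := ⌊T / I⌋₊
  have hevent : {ω | ∃ k ≤ n, b < ∑ j ∈ range (k + 1), Δ j ω}
      =ᵐ[P] {ω | b < ∑ j ∈ range (n + 1), Δ j ω} := by
    filter_upwards [ae_all_iff.2 hnonneg] with ω hω
    exact propext (exists_le_lt_sum_range_iff hω)
  have hmoment : ∫ ω, (∑ j ∈ range (n + 1), Δ j ω) ^ 2 ∂P
      ≤ T * N ^ 2 * (I₂ + I₁ ^ 2 / I ^ 2 * (T + I)) :=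
    (integral_sq_sum_range_le hadapt hL2 hnonneg hΔ0 (by positivity) hcond1 hcond2 n).trans
      (floor_div_mul_add_sq_mul_le hT hI hI₂.le)
  calc P {ω | ∃ k ≤ n, b < ∑ j ∈ range (k + 1), Δ j ω}
      = P {ω | b < ∑ j ∈ range (n + 1), Δ j ω} := measure_congr hevent
    _ ≤ ENNReal.ofReal ((∫ ω, (∑ j ∈ range (n + 1), Δ j ω) ^ 2 ∂P) / b ^ 2) :=
      measure_lt_le_integral_sq_div_sq (memLp_finsetSum _ fun j _ => hL2 j) hb
    _ ≤ _ := ENNReal.ofReal_le_ofReal <|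
      (div_le_div_of_nonneg_right hmoment (sq_nonneg b)).trans_eq (by ring)

/-- Bound on the probability that the cumulated number of object transitions up to
horizon `⌊T/I⌋` exceeds `b`:
`P(sup_{0≤k≤⌊T/I⌋} Σ_{j=0}^k Δ_j > b) ≤ (T N²/b²)(I₂ + (I₁²/I²)(T + I))`. -/
theorem cumulated_transitions_bound {Ω : Type*} {m0 : MeasurableSpace Ω}
    (P : Measure Ω) [IsProbabilityMeasure P]
    (ℱ : Filtration ℕ m0) (Δ : ℕ → Ω → ℝ)
    (hadapt : Adapted ℱ Δ)
    (hL2 : ∀ k, MemLp (Δ k) 2 P)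
    (hnonneg : ∀ k, 0 ≤ᵐ[P] Δ k)
    (hΔ0 : Δ 0 =ᵐ[P] 0)
    (N : ℕ) (hN : 1 ≤ N) (T I I₁ I₂ : ℝ)
    (hT : 0 < T) (hI : 0 < I) (hI₁ : 0 < I₁) (hI₂ : 0 < I₂) (hIT : I ≤ T)
    (hcond1 : ∀ k, P[Δ (k + 1) | ℱ k] ≤ᵐ[P] fun _ => (N : ℝ) * I₁)
    (hcond2 : ∀ k, P[fun ω => (Δ (k + 1) ω) ^ 2 | ℱ k]
        ≤ᵐ[P] fun _ => (N : ℝ) ^ 2 * I * I₂)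
    (b : ℝ) (hb : 0 < b) :
    P {ω | ∃ k ≤ ⌊T / I⌋₊, b < ∑ j ∈ Finset.range (k + 1), Δ j ω}
      ≤ ENNReal.ofReal
          (T * (N : ℝ) ^ 2 / b ^ 2 * (I₂ + I₁ ^ 2 / I ^ 2 * (T + I))) :=
  cumulated_transitions_bound_general P ℱ Δ hadapt hL2 hnonneg hΔ0 N T I I₁ I₂ hT hI hI₁ hI₂ hcond1
    hcond2 b hb
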